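/- arXiv:1304.7182 — 2 statements merged into one kernel-verified Lean document; each statement's English description precedes it below -/
import Mathlib

section
/- Let G be a finite abelian group and ν a probability measure whose support is exactly {g, h} for two elements g, h ∈ G. If the cyclic subgroup generated by g⁻¹h equals the subgroup generated by {g, h}, then ν is acyclic. -/
/-!
Write `u = g⁻¹ * h` and `n = |G|`. Since `g ^ n = 1`, every power `u ^ k` with `k ≤ n` equals
`g ^ (n - k) * h ^ k`, a product of `n` elements of `{g, h}`. All elements of `⟨u⟩` are such
powers because `orderOf u ≤ n`, so `{g, h} ^ n` contains `⟨u⟩ = ⟨g, h⟩`; the reverse inclusion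
is clear.
-/

open Pointwise

theorem Set.pow_mul_pow_mem_pow_add {M : Type*} [Monoid M] {s : Set M} {a b : M}
    (ha : a ∈ s) (hb : b ∈ s) (m k : ℕ) : a ^ m * b ^ k ∈ s ^ (m + k) := by
  rw [pow_add]
  exact Set.mul_mem_mul (Set.pow_mem_pow ha) (Set.pow_mem_pow hb)

section FiniteCommGroup

variable {G : Type*} [CommGroup G] [Fintype G]

theorem inv_mul_pow_mem_pair_pow_card (g h : G) {k : ℕ} (hk : k ≤ Fintype.card G) :
    (g⁻¹ * h) ^ k ∈ ({g, h} : Set G) ^ Fintype.card G := by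
  obtain ⟨m, hm⟩ := Nat.exists_eq_add_of_le' hk
  have hpow : (g⁻¹ * h) ^ k = g ^ m * h ^ k := by
    calc (g⁻¹ * h) ^ k = g ^ Fintype.card G * (g⁻¹ * h) ^ k := by rw [pow_card_eq_one, one_mul]
      _ = g ^ m * h ^ k := by rw [hm, pow_add, mul_assoc, ← mul_pow, mul_inv_cancel_left]
  rw [hpow, hm]
  exact Set.pow_mul_pow_mem_pow_add (Set.mem_insert g {h}) (Set.mem_insert_of_mem g rfl) m k

theorem zpowers_inv_mul_subset_pair_pow_card (g h : G) :
    (Subgroup.zpowers (g⁻¹ * h) : Set G) ⊆ ({g, h} : Set G) ^ Fintype.card G := by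
  classical
  intro x hx
  obtain ⟨k, hk, rfl⟩ := Finset.mem_image.1 (mem_zpowers_iff_mem_range_orderOf.1 hx)
  exact inv_mul_pow_mem_pair_pow_card g h
    ((Finset.mem_range.1 hk).le.trans orderOf_le_card_univ)

theorem pair_pow_card_eq_closure {g h : G}
    (hcyc : Subgroup.zpowers (g⁻¹ * h) = Subgroup.closure {g, h}) :
    ({g, h} : Set G) ^ Fintype.card G = Subgroup.closure {g, h} :=
  subset_antisymm (Subgroup.pow_subset Subgroup.subset_closure)
    (hcyc ▸ zpowers_inv_mul_subset_pair_pow_card g h)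

end FiniteCommGroup

theorem acyclic_two_point_support_general {G : Type*} [CommGroup G] [Fintype G]
    (ν : G → ℝ)
    (g h : G)
    (hs : {x : G | 0 < ν x} = {g, h})
    (hcyc : Subgroup.zpowers (g⁻¹ * h) = Subgroup.closure {g, h}) :
    ∃ N : ℕ, 0 < N ∧
      {x : G | 0 < ν x} ^ N = (Subgroup.closure {x : G | 0 < ν x} : Set G) := by
  rw [hs]
  exact ⟨Fintype.card G, Fintype.card_pos, pair_pow_card_eq_closure hcyc⟩

/-- For a probability measure on a finite abelian group with support exactly `{g, h}`:
if the cyclic subgroup generated by `g⁻¹h` equals the subgroup generated by `{g, h}`,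
then `ν` is acyclic. -/
theorem acyclic_two_point_support {G : Type*} [CommGroup G] [Fintype G]
    (ν : G → ℝ) (h0 : ∀ x, 0 ≤ ν x) (h1 : ∑ x, ν x = 1)
    (g h : G) (hgh : g ≠ h)
    (hs : {x : G | 0 < ν x} = {g, h})
    (hcyc : Subgroup.zpowers (g⁻¹ * h) = Subgroup.closure {g, h}) :
    ∃ N : ℕ, 0 < N ∧
      {x : G | 0 < ν x} ^ N = (Subgroup.closure {x : G | 0 < ν x} : Set G) :=
  acyclic_two_point_support_general ν g h hs hcyc
end

section
/- Let G be a finite group and ν an acyclic probability measure with H = ⟨supp(ν)⟩. For every probability measure μ on G, the iterates T_ν^m(μ) = ν^m * μ converge as m → ∞ to ((1/|H|) Σ_{h∈H} δ_h) * μ. Consequently the limit point depends affinely on μ. -/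
open Pointwise Filter Topology

/-!
Let `u` be the uniform probability vector on `H`. Every probability vector `p` supported on `H`
satisfies `p * u = u * p = u`, so `ν^(m+k) - u = (ν^m - u) * ν^k`. Convolution does not increase
the `ℓ¹` norm, hence `D m = ‖ν^m - u‖₁` is antitone. By acyclicity `ν^N` is positive on all of
`H`, so `ν^N ≥ ε u` for some `ε > 0`; since `(ν^m - u) * u = 0`, one may replace `ν^N` by the
sub-probability vector `ν^N - ε u`, which gives the Doeblin bound `D (m + N) ≤ (1 - ε) D m`.
Therefore `D m → 0`, and the theorem follows by convolving with `μ`.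
-/

/-- Convolution of two probability vectors on a finite group. -/
def conv {G : Type*} [Group G] [Fintype G] (p q : G → ℝ) : G → ℝ :=
  fun g => ∑ a : G, p a * q (a⁻¹ * g)

/-- `k`-fold convolution power of a probability vector. -/
def convPow {G : Type*} [Group G] [Fintype G] [DecidableEq G] (p : G → ℝ) : ℕ → G → ℝ
  | 0 => fun g => if g = 1 then 1 else 0
  | n + 1 => conv (convPow p n) p

section Convolution

variable {G : Type*} [Group G] [Fintype G]

lemma conv_eq_sum_mul_inv (p q : G → ℝ) (g : G) :
    conv p q g = ∑ b, p (g * b⁻¹) * q b := by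
  rw [conv, ← Equiv.sum_comp ((Equiv.inv G).trans (Equiv.mulLeft g))]
  simp [mul_assoc]

lemma sum_conv (p q : G → ℝ) : ∑ g, conv p q g = (∑ g, p g) * ∑ g, q g := by
  simp only [conv]
  rw [Finset.sum_comm, Finset.sum_mul]
  refine Finset.sum_congr rfl fun a _ => ?_
  rw [← Finset.mul_sum]
  exact congrArg _ (Equiv.sum_comp (Equiv.mulLeft a⁻¹) q)

lemma conv_nonneg {p q : G → ℝ} (hp : ∀ g, 0 ≤ p g) (hq : ∀ g, 0 ≤ q g) (g : G) :
    0 ≤ conv p q g :=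
  Finset.sum_nonneg fun a _ => mul_nonneg (hp a) (hq _)

lemma conv_assoc (p q r : G → ℝ) : conv (conv p q) r = conv p (conv q r) := by
  funext g
  simp only [conv, Finset.sum_mul, Finset.mul_sum]
  rw [Finset.sum_comm]
  refine Finset.sum_congr rfl fun b _ => ?_
  rw [← Equiv.sum_comp (Equiv.mulLeft b)]
  simp [mul_assoc]

lemma conv_sub_left (p p' q : G → ℝ) : conv (p - p') q = conv p q - conv p' q := by
  funext g
  simp [conv, sub_mul]

lemma conv_sub_right (p q q' : G → ℝ) : conv p (q - q') = conv p q - conv p q' := by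
  funext g
  simp [conv, mul_sub]

lemma conv_smul_right (c : ℝ) (p q : G → ℝ) : conv p (c • q) = c • conv p q := by
  funext g
  simp [conv, Finset.mul_sum, mul_left_comm]

lemma sum_abs_conv_le (f : G → ℝ) {q : G → ℝ} (hq : ∀ g, 0 ≤ q g) :
    ∑ g, |conv f q g| ≤ (∑ g, |f g|) * ∑ g, q g := by
  rw [← sum_conv]
  refine Finset.sum_le_sum fun g _ => (Finset.abs_sum_le_sum_abs _ _).trans_eq ?_
  simp [conv, abs_mul, abs_of_nonneg (hq _)]

lemma setOf_conv_pos {p q : G → ℝ} (hp : ∀ g, 0 ≤ p g) (hq : ∀ g, 0 ≤ q g) :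
    {g | 0 < conv p q g} = {g | 0 < p g} * {g | 0 < q g} := by
  ext g
  constructor
  · intro hg
    obtain ⟨a, -, ha⟩ := Finset.exists_lt_of_sum_lt (f := fun _ => (0 : ℝ))
      (g := fun a => p a * q (a⁻¹ * g)) (by simpa [conv] using hg)
    exact ⟨a, pos_of_mul_pos_left ha (hq _), a⁻¹ * g, pos_of_mul_pos_right ha (hp a),
      mul_inv_cancel_left a g⟩
  · rintro ⟨a, ha, b, hb, rfl⟩
    calc (0 : ℝ) < p a * q (a⁻¹ * (a * b)) := by rw [inv_mul_cancel_left]; exact mul_pos ha hb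
      _ ≤ conv p q (a * b) :=
        Finset.single_le_sum (f := fun a' => p a' * q (a'⁻¹ * (a * b)))
          (fun i _ => mul_nonneg (hp i) (hq _)) (Finset.mem_univ a)

end Convolution

section ConvPow

variable {G : Type*} [Group G] [Fintype G] [DecidableEq G]

lemma conv_delta (p : G → ℝ) : conv p (fun g => if g = 1 then 1 else 0) = p := by
  funext g
  rw [conv_eq_sum_mul_inv, Finset.sum_eq_single 1] <;> simp +contextual

lemma convPow_add (ν : G → ℝ) (m n : ℕ) :
    convPow ν (m + n) = conv (convPow ν m) (convPow ν n) := by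
  induction n with
  | zero => exact (conv_delta _).symm
  | succ n ih => rw [← add_assoc, convPow, ih, conv_assoc, convPow]

lemma convPow_nonneg {ν : G → ℝ} (h0 : ∀ g, 0 ≤ ν g) (m : ℕ) (g : G) : 0 ≤ convPow ν m g := by
  induction m generalizing g with
  | zero => simp only [convPow]; positivity
  | succ n ih => exact conv_nonneg ih h0 g

lemma sum_convPow (ν : G → ℝ) (m : ℕ) : ∑ g, convPow ν m g = (∑ g, ν g) ^ m := by
  induction m with
  | zero => simp [convPow]
  | succ n ih => rw [convPow, sum_conv, ih, pow_succ]

lemma setOf_convPow_pos {ν : G → ℝ} (h0 : ∀ g, 0 ≤ ν g) (m : ℕ) :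
    {g | 0 < convPow ν m g} = {g | 0 < ν g} ^ m := by
  induction m with
  | zero => ext g; by_cases hg : g = 1 <;> simp [convPow, hg]
  | succ n ih => rw [pow_succ, ← ih, convPow, setOf_conv_pos (convPow_nonneg h0 n) h0]

lemma convPow_eq_zero_of_notMem {ν : G → ℝ} (h0 : ∀ g, 0 ≤ ν g) {H : Subgroup G}
    (hνH : {g | 0 < ν g} ⊆ H) (m : ℕ) {x : G} (hx : x ∉ H) : convPow ν m x = 0 := by
  refine le_antisymm (not_lt.1 fun hpos => hx ?_) (convPow_nonneg h0 m x)
  have hmem : x ∈ {g | 0 < convPow ν m g} := hpos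
  rw [setOf_convPow_pos h0] at hmem
  exact Subgroup.pow_subset hνH hmem

end ConvPow

open scoped Classical in
noncomputable def uniformOnSubgroup {G : Type*} [Group G] (H : Subgroup G) : G → ℝ :=
  fun x => if x ∈ H then (Nat.card H : ℝ)⁻¹ else 0

section Uniform

variable {G : Type*} [Group G] {H : Subgroup G}

lemma uniformOnSubgroup_inv_mul {a : G} (ha : a ∈ H) (g : G) :
    uniformOnSubgroup H (a⁻¹ * g) = uniformOnSubgroup H g := by
  unfold uniformOnSubgroup
  rw [H.mul_mem_cancel_left (H.inv_mem ha)]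

lemma uniformOnSubgroup_mul_inv {b : G} (hb : b ∈ H) (g : G) :
    uniformOnSubgroup H (g * b⁻¹) = uniformOnSubgroup H g := by
  unfold uniformOnSubgroup
  rw [H.mul_mem_cancel_right (H.inv_mem hb)]

variable [Fintype G]

lemma sum_uniformOnSubgroup : ∑ x, uniformOnSubgroup H x = 1 := by
  classical
  have hcard : (Nat.card H : ℝ) ≠ 0 := by exact_mod_cast Nat.card_pos.ne'
  rw [Nat.card_eq_fintype_card, Fintype.card_subtype] at hcard
  simp [uniformOnSubgroup, Finset.sum_ite, Nat.card_eq_fintype_card, Fintype.card_subtype, hcard]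

lemma conv_uniformOnSubgroup {p : G → ℝ} (hp : ∀ x ∉ H, p x = 0) :
    conv p (uniformOnSubgroup H) = (∑ a, p a) • uniformOnSubgroup H := by
  funext g
  simp only [conv, Pi.smul_apply, smul_eq_mul, Finset.sum_mul]
  refine Finset.sum_congr rfl fun a _ => ?_
  by_cases ha : a ∈ H
  · rw [uniformOnSubgroup_inv_mul ha]
  · simp [hp a ha]

lemma uniformOnSubgroup_conv {q : G → ℝ} (hq : ∀ x ∉ H, q x = 0) :
    conv (uniformOnSubgroup H) q = (∑ b, q b) • uniformOnSubgroup H := by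
  funext g
  simp only [conv_eq_sum_mul_inv, Pi.smul_apply, smul_eq_mul, Finset.sum_mul]
  refine Finset.sum_congr rfl fun b _ => ?_
  by_cases hb : b ∈ H
  · rw [uniformOnSubgroup_mul_inv hb, mul_comm]
  · simp [hq b hb]

/-- Doeblin's contraction: a minorant `ε u` of `w` is invisible to vectors of total mass zero. -/
lemma sum_abs_conv_le_of_minorant {e w : G → ℝ} {ε : ℝ} (he : ∑ x, e x = 0)
    (heH : ∀ x ∉ H, e x = 0) (hw : ∀ x, ε * uniformOnSubgroup H x ≤ w x) :
    ∑ x, |conv e w x| ≤ (∑ x, |e x|) * (∑ x, w x - ε) := by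
  have hshift : conv e w = conv e (w - ε • uniformOnSubgroup H) := by
    rw [conv_sub_right, conv_smul_right, conv_uniformOnSubgroup heH, he, zero_smul, smul_zero,
      sub_zero]
  have hmass : ∑ x, (w - ε • uniformOnSubgroup H) x = ∑ x, w x - ε := by
    simp [Finset.sum_sub_distrib, ← Finset.mul_sum, sum_uniformOnSubgroup]
  rw [hshift, ← hmass]
  exact sum_abs_conv_le e fun x => sub_nonneg.2 (hw x)

lemma exists_pos_mul_uniformOnSubgroup_le {w : G → ℝ} (hw0 : ∀ x, 0 ≤ w x)
    (hwH : ∀ x ∈ H, 0 < w x) : ∃ ε > 0, ∀ x, ε * uniformOnSubgroup H x ≤ w x := by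
  classical
  obtain ⟨x₀, hx₀, hmin⟩ := Finset.exists_min_image (Finset.univ.filter (· ∈ H)) w
    ⟨1, by simp [H.one_mem]⟩
  have hcard : (0 : ℝ) < Nat.card H := by exact_mod_cast Nat.card_pos
  refine ⟨w x₀ * Nat.card H, mul_pos (hwH x₀ (by simpa using hx₀)) hcard, fun x => ?_⟩
  by_cases hx : x ∈ H
  · simpa [uniformOnSubgroup, hx, hcard.ne'] using hmin x (by simpa using hx)
  · simpa [uniformOnSubgroup, hx] using hw0 x

end Uniform

lemma tendsto_zero_of_antitone_of_le_mul {D : ℕ → ℝ} (hD0 : ∀ m, 0 ≤ D m) (hD : Antitone D)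
    {r : ℝ} (hr : r < 1) {N : ℕ} (hN : ∀ m, D (m + N) ≤ r * D m) :
    Tendsto D atTop (𝓝 0) := by
  obtain ⟨L, hL⟩ : ∃ L, Tendsto D atTop (𝓝 L) :=
    ⟨_, tendsto_atTop_ciInf hD ⟨0, by rintro _ ⟨m, rfl⟩; exact hD0 m⟩⟩
  have hLr : L ≤ r * L :=
    le_of_tendsto_of_tendsto' (hL.comp (tendsto_add_atTop_nat N)) (hL.const_mul r) hN
  have hL0 : 0 ≤ L := ge_of_tendsto' hL hD0
  rwa [show L = 0 by nlinarith] at hL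

section Convergence

variable {G : Type*} [Group G] [Fintype G] [DecidableEq G] {ν : G → ℝ} {H : Subgroup G}

lemma convPow_add_sub_uniformOnSubgroup (h0 : ∀ g, 0 ≤ ν g) (h1 : ∑ g, ν g = 1)
    (hνH : {g | 0 < ν g} ⊆ H) (m k : ℕ) :
    convPow ν (m + k) - uniformOnSubgroup H =
      conv (convPow ν m - uniformOnSubgroup H) (convPow ν k) := by
  rw [conv_sub_left, ← convPow_add,
    uniformOnSubgroup_conv fun x => convPow_eq_zero_of_notMem h0 hνH k, sum_convPow, h1,
    one_pow, one_smul]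

lemma tendsto_sum_abs_convPow_sub_uniformOnSubgroup (h0 : ∀ g, 0 ≤ ν g)
    (h1 : ∑ g, ν g = 1) (hνH : {g | 0 < ν g} ⊆ H) {N : ℕ} {ε : ℝ} (hε : 0 < ε)
    (hεN : ∀ x, ε * uniformOnSubgroup H x ≤ convPow ν N x) :
    Tendsto (fun m => ∑ x, |convPow ν m x - uniformOnSubgroup H x|) atTop (𝓝 0) := by
  have hstep : ∀ m k, ∑ x, |convPow ν (m + k) x - uniformOnSubgroup H x| =
      ∑ x, |conv (convPow ν m - uniformOnSubgroup H) (convPow ν k) x| := fun m k => by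
    rw [← convPow_add_sub_uniformOnSubgroup h0 h1 hνH]; rfl
  refine tendsto_zero_of_antitone_of_le_mul (fun m => Finset.sum_nonneg fun x _ => abs_nonneg _)
    (antitone_nat_of_succ_le fun m => ?_) (sub_lt_self 1 hε) (N := N) fun m => ?_
  · rw [hstep]
    refine (sum_abs_conv_le _ (convPow_nonneg h0 1)).trans_eq ?_
    rw [sum_convPow, h1, one_pow, mul_one]
    rfl
  · rw [hstep, mul_comm]
    have hmass : ∑ x, (convPow ν m - uniformOnSubgroup H) x = 0 := by
      simp [Finset.sum_sub_distrib, sum_convPow, h1, sum_uniformOnSubgroup]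
    have hsupp : ∀ x ∉ H, (convPow ν m - uniformOnSubgroup H) x = 0 := fun x hx => by
      simp [convPow_eq_zero_of_notMem h0 hνH m hx, uniformOnSubgroup, hx]
    refine (sum_abs_conv_le_of_minorant hmass hsupp hεN).trans_eq ?_
    rw [sum_convPow, h1, one_pow]
    rfl

end Convergence

open scoped Classical in
/-- For an acyclic `ν` with `H = ⟨supp ν⟩` and any probability measure `μ`, the iterates
`T_ν^m(μ) = ν^m * μ` converge to `((1/|H|) Σ_{h∈H} δ_h) * μ`; in particular the limit
depends affinely on `μ`. -/
theorem iterates_tendsto_uniform_conv {G : Type*} [Group G] [Fintype G] [DecidableEq G]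
    (ν : G → ℝ) (h0 : ∀ g, 0 ≤ ν g) (h1 : ∑ g, ν g = 1)
    (H : Subgroup G) (hH : H = Subgroup.closure {g : G | 0 < ν g})
    (hacyclic : ∃ N : ℕ, 0 < N ∧ {g : G | 0 < ν g} ^ N = (H : Set G)) :
    ∀ μ : G → ℝ, (∀ g, 0 ≤ μ g) → (∑ g, μ g = 1) →
      ∀ g : G, Filter.Tendsto (fun m => conv (convPow ν m) μ g) Filter.atTop
        (nhds (conv (fun x => if x ∈ H then (Nat.card H : ℝ)⁻¹ else 0) μ g)) := by
  intro μ _ _ g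
  have hνH : {g | 0 < ν g} ⊆ H := hH ▸ Subgroup.subset_closure
  obtain ⟨N, -, hN⟩ := hacyclic
  obtain ⟨ε, hε, hεN⟩ := exists_pos_mul_uniformOnSubgroup_le (convPow_nonneg h0 N)
    fun x hx => show x ∈ {g | 0 < convPow ν N g} by rwa [setOf_convPow_pos h0, hN]
  have hL1 := tendsto_sum_abs_convPow_sub_uniformOnSubgroup h0 h1 hνH hε hεN
  have hpt : ∀ a, Tendsto (fun m => convPow ν m a) atTop (𝓝 (uniformOnSubgroup H a)) :=
    fun a => tendsto_iff_norm_sub_tendsto_zero.2 <| squeeze_zero (fun _ => norm_nonneg _)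
      (fun m => Finset.single_le_sum (f := fun x => |convPow ν m x - uniformOnSubgroup H x|)
        (fun _ _ => abs_nonneg _) (Finset.mem_univ a)) hL1
  exact tendsto_finsetSum _ fun a _ => (hpt a).mul_const _
end
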